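/- For n ≥ 3, every similarity submodule of Z[ξ_n] (a subgroup of the form aZ[ξ_n] or a·conj(Z[ξ_n]) for some nonzero complex number a, contained in Z[ξ_n]) is a nonzero principal ideal of Z[ξ_n], and conversely every nonzero principal ideal is a similarity submodule. -/
import Mathlib


open Complex

/-- For `n ≥ 3` and `M = ℤ[ξ_n] ⊆ ℂ`, a subset `S ⊆ M` of the form `aM` or
`a·conj(M)` with `a ∈ ℂ*` (a similarity submodule) is the same thing as a
nonzero principal ideal `bM` with `0 ≠ b ∈ M`. -/
theorem similarity_submodule_iff_principal_ideal (n : ℕ) (hn : 3 ≤ n)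
    (ξ : ℂ) (hξ : ξ = Complex.exp (2 * Real.pi * Complex.I / n))
    (M : Set ℂ) (hM : M = (Algebra.adjoin ℤ ({ξ} : Set ℂ) : Subalgebra ℤ ℂ))
    (S : Set ℂ) :
    (S ⊆ M ∧ ∃ a : ℂ, a ≠ 0 ∧
        (S = (fun z => a * z) '' M ∨ S = (fun z => a * (starRingEnd ℂ) z) '' M))
      ↔ ∃ b ∈ M, b ≠ 0 ∧ S = (fun z => b * z) '' M := by
  subst hM
  set A : Subalgebra ℤ ℂ := Algebra.adjoin ℤ ({ξ} : Set ℂ) with hA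
  have hξA : ξ ∈ A := Algebra.self_mem_adjoin_singleton ℤ ξ
  have hn0 : (n : ℂ) ≠ 0 := Nat.cast_ne_zero.mpr (by omega)
  have hξn : ξ ^ n = 1 := by
    rw [hξ, ← Complex.exp_nat_mul]
    have h : (n : ℂ) * (2 * Real.pi * Complex.I / n) = 2 * Real.pi * Complex.I := by
      field_simp
    rw [h, Complex.exp_two_pi_mul_I]
  have hξ0 : ξ ≠ 0 := by rw [hξ]; exact Complex.exp_ne_zero _
  have hconjξ : (starRingEnd ℂ) ξ = ξ ^ (n - 1) := by
    have h1 : (starRingEnd ℂ) ξ * ξ = 1 := by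
      rw [hξ, ← Complex.exp_conj, ← Complex.exp_add]
      have h : (starRingEnd ℂ) (2 * Real.pi * Complex.I / n)
          + (2 * Real.pi * Complex.I / n) = 0 := by
        simp [map_div₀, map_mul, Complex.conj_I, map_ofNat]
        ring
      rw [h, Complex.exp_zero]
    have h2 : ξ ^ (n - 1) * ξ = 1 := by
      rw [← pow_succ, Nat.sub_add_cancel (by omega)]; exact hξn
    exact mul_right_cancel₀ hξ0 (h1.trans h2.symm)
  have hconjA : ∀ z ∈ A, (starRingEnd ℂ) z ∈ A := by
    intro z hz
    induction hz using Algebra.adjoin_induction with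
    | mem x hx =>
      rw [Set.mem_singleton_iff] at hx
      subst hx
      rw [hconjξ]
      exact pow_mem hξA _
    | algebraMap r => simpa using A.algebraMap_mem r
    | add x y _ _ hx hy => rw [map_add]; exact add_mem hx hy
    | mul x y _ _ hx hy => rw [map_mul]; exact mul_mem hx hy
  constructor
  · rintro ⟨hSM, a, ha0, hS | hS⟩
    · exact ⟨a, hSM (hS ▸ ⟨1, one_mem A, mul_one a⟩), ha0, hS⟩
    · have hS' : S = (fun z => a * z) '' (A : Set ℂ) := by
        rw [hS]; ext w
        simp only [Set.mem_image, SetLike.mem_coe]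
        constructor
        · rintro ⟨z, hz, rfl⟩; exact ⟨(starRingEnd ℂ) z, hconjA z hz, rfl⟩
        · rintro ⟨z, hz, rfl⟩
          exact ⟨(starRingEnd ℂ) z, hconjA z hz, by simp⟩
      exact ⟨a, hSM (hS' ▸ ⟨1, one_mem A, mul_one a⟩), ha0, hS'⟩
  · rintro ⟨b, hbA, hb0, rfl⟩
    refine ⟨?_, b, hb0, Or.inl rfl⟩
    rintro w ⟨z, hz, rfl⟩
    exact mul_mem hbA hz
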